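/- (Unconstrained value dominates constrained value — identical updates.) Let U_w be the unique bounded fixed point of the unconstrained single-arm operator U(π) = max{U_S(π), U_NS(π)}, where U_S(π) = ρ(π) + β[ρ(π)U(Γ1(π)) + (1−ρ(π))U(Γ0(π))] and U_NS(π) = w + βU(γ(π)). Suppose the constrained model's unavailable-arm belief update equals γ (the same as its not-play update). Then for the same parameters p00, p10, ρ0, ρ1, w, β and any availability probabilities θ11, θ01, θ00 ∈ [0,1], U_w(π) ≥ V_w(π, y) for all π ∈ [0,1] and y ∈ {0,1}. -/

import Mathlib

open Set

noncomputable section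

/-- Expected immediate reward (success probability) at belief `π`. -/
def rhoB (ρ0 ρ1 π : ℝ) : ℝ := π * ρ0 + (1 - π) * ρ1

/-- Belief update after a play resulting in success. -/
def Gam1 (p00 p10 ρ0 ρ1 π : ℝ) : ℝ :=
  (π * ρ0 * p00 + (1 - π) * ρ1 * p10) / (π * ρ0 + (1 - π) * ρ1)

/-- Belief update after a play resulting in failure. -/
def Gam0 (p00 p10 ρ0 ρ1 π : ℝ) : ℝ :=
  (π * (1 - ρ0) * p00 + (1 - π) * (1 - ρ1) * p10) /
    (π * (1 - ρ0) + (1 - π) * (1 - ρ1))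

/-- Belief update without observation (natural Markov evolution). -/
def gam (p00 p10 π : ℝ) : ℝ := π * p00 + (1 - π) * p10

/-- Action value of playing an available arm. -/
def Lact1 (p00 p10 ρ0 ρ1 β θ11 : ℝ) (V : ℝ → Bool → ℝ) (π : ℝ) : ℝ :=
  rhoB ρ0 ρ1 π
    + β * rhoB ρ0 ρ1 π *
        (θ11 * V (Gam1 p00 p10 ρ0 ρ1 π) true +
          (1 - θ11) * V (Gam1 p00 p10 ρ0 ρ1 π) false)
    + β * (1 - rhoB ρ0 ρ1 π) *
        (θ11 * V (Gam0 p00 p10 ρ0 ρ1 π) true +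
          (1 - θ11) * V (Gam0 p00 p10 ρ0 ρ1 π) false)

/-- Action value of not playing an available arm (subsidy `w`). -/
def Lact0a (p00 p10 β w θ01 : ℝ) (V : ℝ → Bool → ℝ) (π : ℝ) : ℝ :=
  w + β * (θ01 * V (gam p00 p10 π) true + (1 - θ01) * V (gam p00 p10 π) false)

/-- Action value for an unavailable arm (subsidy `w`). -/
def Lact0u (p00 p10 β w θ00 : ℝ) (V : ℝ → Bool → ℝ) (π : ℝ) : ℝ :=
  w + β * (θ00 * V (gam p00 p10 π) true + (1 - θ00) * V (gam p00 p10 π) false)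

/-- Bellman operator of the constrained restless single-armed bandit with
stochastic availability; availability `y` is encoded by `Bool`. -/
def TwOp (p00 p10 ρ0 ρ1 β w θ11 θ01 θ00 : ℝ) (V : ℝ → Bool → ℝ) : ℝ → Bool → ℝ :=
  fun π y =>
    if y then max (Lact1 p00 p10 ρ0 ρ1 β θ11 V π) (Lact0a p00 p10 β w θ01 V π)
    else Lact0u p00 p10 β w θ00 V π

/-- Bounded on the belief space `[0,1] × {0,1}`. -/
def BddOnIcc (V : ℝ → Bool → ℝ) : Prop :=
  ∃ C : ℝ, ∀ π ∈ Icc (0:ℝ) 1, ∀ y : Bool, |V π y| ≤ C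

/-- Fixed point of an operator on the belief space `[0,1] × {0,1}`. -/
def FixedOnIcc (T : (ℝ → Bool → ℝ) → ℝ → Bool → ℝ) (V : ℝ → Bool → ℝ) : Prop :=
  ∀ π ∈ Icc (0:ℝ) 1, ∀ y : Bool, T V π y = V π y

/-- Bellman operator of the unconstrained (always available) restless single
armed bandit with subsidy `w`. -/
def TuOp (p00 p10 ρ0 ρ1 β w : ℝ) (U : ℝ → ℝ) (π : ℝ) : ℝ :=
  max
    (rhoB ρ0 ρ1 π
      + β * (rhoB ρ0 ρ1 π * U (Gam1 p00 p10 ρ0 ρ1 π)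
          + (1 - rhoB ρ0 ρ1 π) * U (Gam0 p00 p10 ρ0 ρ1 π)))
    (w + β * U (gam p00 p10 π))

/-! The difference `V π y - U π` is controlled by a contraction argument: any upper bound `B` for
it on `[0,1] × {0,1}` is improved to `β * B`, because each action value of the constrained model
differs from the matching action value of the unconstrained one by `β` times a convex
combination of such differences (the availability probabilities and `ρ(π)` being the weights),
and the unavailable-arm value has the same shape as the not-play value. Iterating from a bound
given by boundedness and letting `β ^ n → 0` gives `V ≤ U`. -/

lemma convexComb_le {θ a b B : ℝ} (hθ : θ ∈ Icc (0:ℝ) 1) (ha : a ≤ B) (hb : b ≤ B) :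
    θ * a + (1 - θ) * b ≤ B := by
  nlinarith [hθ.1, hθ.2]

lemma le_zero_of_bound_imp_mul_bound {ι : Type*} {s : Set ι} {f : ι → ℝ} {β : ℝ}
    (hβ0 : 0 ≤ β) (hβ1 : β < 1) (hbdd : ∃ B, ∀ i ∈ s, f i ≤ B)
    (hstep : ∀ B, (∀ i ∈ s, f i ≤ B) → ∀ i ∈ s, f i ≤ β * B) :
    ∀ i ∈ s, f i ≤ 0 := by
  obtain ⟨B, hB⟩ := hbdd
  have hpow : ∀ n : ℕ, ∀ i ∈ s, f i ≤ β ^ n * B := by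
    intro n
    induction n with
    | zero => simpa using hB
    | succ n ih => simpa only [pow_succ', mul_assoc] using hstep _ ih
  have hlim : Filter.Tendsto (fun n : ℕ => β ^ n * B) Filter.atTop (nhds 0) := by
    simpa using (tendsto_pow_atTop_nhds_zero_of_lt_one hβ0 hβ1).mul_const B
  exact fun i hi => ge_of_tendsto' hlim fun n => hpow n i hi

lemma weightedUpdate_mem_Icc {p00 p10 a b π : ℝ} (hp00 : p00 ∈ Icc (0:ℝ) 1)
    (hp10 : p10 ∈ Icc (0:ℝ) 1) (ha : 0 ≤ a) (hb : 0 ≤ b) (hπ : π ∈ Icc (0:ℝ) 1) :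
    (π * a * p00 + (1 - π) * b * p10) / (π * a + (1 - π) * b) ∈ Icc (0:ℝ) 1 := by
  obtain ⟨hπ0, hπ1⟩ := hπ
  have hπa : 0 ≤ π * a := mul_nonneg hπ0 ha
  have hπb : 0 ≤ (1 - π) * b := mul_nonneg (sub_nonneg.2 hπ1) hb
  refine ⟨div_nonneg ?_ (add_nonneg hπa hπb), div_le_one_of_le₀ ?_ (add_nonneg hπa hπb)⟩
  · nlinarith [hp00.1, hp10.1]
  · nlinarith [hp00.2, hp10.2]

section BeliefSpace

variable {p00 p10 ρ0 ρ1 π : ℝ}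

lemma gam_mem_Icc (hp00 : p00 ∈ Icc (0:ℝ) 1) (hp10 : p10 ∈ Icc (0:ℝ) 1)
    (hπ : π ∈ Icc (0:ℝ) 1) : gam p00 p10 π ∈ Icc (0:ℝ) 1 := by
  obtain ⟨hπ0, hπ1⟩ := hπ
  constructor <;> unfold gam <;> nlinarith [hp00.1, hp00.2, hp10.1, hp10.2]

lemma Gam1_mem_Icc (hp00 : p00 ∈ Icc (0:ℝ) 1) (hp10 : p10 ∈ Icc (0:ℝ) 1)
    (hρ0 : 0 ≤ ρ0) (hρ1 : 0 ≤ ρ1) (hπ : π ∈ Icc (0:ℝ) 1) :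
    Gam1 p00 p10 ρ0 ρ1 π ∈ Icc (0:ℝ) 1 :=
  weightedUpdate_mem_Icc hp00 hp10 hρ0 hρ1 hπ

lemma Gam0_mem_Icc (hp00 : p00 ∈ Icc (0:ℝ) 1) (hp10 : p10 ∈ Icc (0:ℝ) 1)
    (hρ0 : ρ0 ≤ 1) (hρ1 : ρ1 ≤ 1) (hπ : π ∈ Icc (0:ℝ) 1) :
    Gam0 p00 p10 ρ0 ρ1 π ∈ Icc (0:ℝ) 1 :=
  weightedUpdate_mem_Icc hp00 hp10 (sub_nonneg.2 hρ0) (sub_nonneg.2 hρ1) hπ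

lemma rhoB_mem_Icc (hρ0 : ρ0 ∈ Icc (0:ℝ) 1) (hρ1 : ρ1 ∈ Icc (0:ℝ) 1)
    (hπ : π ∈ Icc (0:ℝ) 1) : rhoB ρ0 ρ1 π ∈ Icc (0:ℝ) 1 :=
  ⟨add_nonneg (mul_nonneg hπ.1 hρ0.1) (mul_nonneg (sub_nonneg.2 hπ.2) hρ1.1),
    convexComb_le hπ hρ0.2 hρ1.2⟩

end BeliefSpace

section ValueComparison

variable {p00 p10 ρ0 ρ1 β w θ π B : ℝ} {V : ℝ → Bool → ℝ} {U : ℝ → ℝ}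

lemma Lact0a_sub_le (hβ : 0 ≤ β) (hθ : θ ∈ Icc (0:ℝ) 1)
    (hγ : ∀ y, V (gam p00 p10 π) y - U (gam p00 p10 π) ≤ B) :
    Lact0a p00 p10 β w θ V π - (w + β * U (gam p00 p10 π)) ≤ β * B := by
  set x := gam p00 p10 π
  calc Lact0a p00 p10 β w θ V π - (w + β * U x)
      = β * (θ * (V x true - U x) + (1 - θ) * (V x false - U x)) := by unfold Lact0a; ring
    _ ≤ β * B := mul_le_mul_of_nonneg_left (convexComb_le hθ (hγ true) (hγ false)) hβ

lemma Lact1_sub_le (hβ : 0 ≤ β) (hθ : θ ∈ Icc (0:ℝ) 1) (hρ : rhoB ρ0 ρ1 π ∈ Icc (0:ℝ) 1)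
    (hΓ1 : ∀ y, V (Gam1 p00 p10 ρ0 ρ1 π) y - U (Gam1 p00 p10 ρ0 ρ1 π) ≤ B)
    (hΓ0 : ∀ y, V (Gam0 p00 p10 ρ0 ρ1 π) y - U (Gam0 p00 p10 ρ0 ρ1 π) ≤ B) :
    Lact1 p00 p10 ρ0 ρ1 β θ V π
      - (rhoB ρ0 ρ1 π + β * (rhoB ρ0 ρ1 π * U (Gam1 p00 p10 ρ0 ρ1 π)
          + (1 - rhoB ρ0 ρ1 π) * U (Gam0 p00 p10 ρ0 ρ1 π))) ≤ β * B := by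
  set r := rhoB ρ0 ρ1 π
  set x1 := Gam1 p00 p10 ρ0 ρ1 π
  set x0 := Gam0 p00 p10 ρ0 ρ1 π
  calc Lact1 p00 p10 ρ0 ρ1 β θ V π - (r + β * (r * U x1 + (1 - r) * U x0))
      = β * (r * (θ * (V x1 true - U x1) + (1 - θ) * (V x1 false - U x1))
          + (1 - r) * (θ * (V x0 true - U x0) + (1 - θ) * (V x0 false - U x0))) := by
        unfold Lact1; ring
    _ ≤ β * B := mul_le_mul_of_nonneg_left (convexComb_le hρ
        (convexComb_le hθ (hΓ1 true) (hΓ1 false)) (convexComb_le hθ (hΓ0 true) (hΓ0 false))) hβ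

lemma sub_le_mul_of_fixedOnIcc {θ11 θ01 θ00 : ℝ}
    (hp00 : p00 ∈ Icc (0:ℝ) 1) (hp10 : p10 ∈ Icc (0:ℝ) 1)
    (hρ0 : ρ0 ∈ Icc (0:ℝ) 1) (hρ1 : ρ1 ∈ Icc (0:ℝ) 1) (hβ : 0 ≤ β)
    (hθ11 : θ11 ∈ Icc (0:ℝ) 1) (hθ01 : θ01 ∈ Icc (0:ℝ) 1) (hθ00 : θ00 ∈ Icc (0:ℝ) 1)
    (hUfix : ∀ π ∈ Icc (0:ℝ) 1, TuOp p00 p10 ρ0 ρ1 β w U π = U π)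
    (hVfix : FixedOnIcc (TwOp p00 p10 ρ0 ρ1 β w θ11 θ01 θ00) V)
    (hB : ∀ π ∈ Icc (0:ℝ) 1, ∀ y, V π y - U π ≤ B) :
    ∀ π ∈ Icc (0:ℝ) 1, ∀ y, V π y - U π ≤ β * B := by
  intro π hπ y
  have hplay := le_max_left _ _ |>.trans_eq (hUfix π hπ)
  have hidle := le_max_right _ _ |>.trans_eq (hUfix π hπ)
  have hγ := hB _ (gam_mem_Icc hp00 hp10 hπ)
  rw [← hVfix π hπ y]
  cases y with
  | false =>
    change Lact0a p00 p10 β w θ00 V π - U π ≤ β * B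
    linarith [Lact0a_sub_le (w := w) hβ hθ00 hγ]
  | true =>
    have hΓ1 := hB _ (Gam1_mem_Icc hp00 hp10 hρ0.1 hρ1.1 hπ)
    have hΓ0 := hB _ (Gam0_mem_Icc hp00 hp10 hρ0.2 hρ1.2 hπ)
    have hρ := rhoB_mem_Icc hρ0 hρ1 hπ
    change max _ _ - U π ≤ β * B
    refine sub_le_iff_le_add.2 (max_le ?_ ?_)
    · linarith [Lact1_sub_le hβ hθ11 hρ hΓ1 hΓ0]
    · linarith [Lact0a_sub_le (w := w) hβ hθ01 hγ]

end ValueComparison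

/-- **Unconstrained value dominates constrained value;
identical updates.** With the same parameters and the unavailable-arm
belief update equal to `γ`, the unconstrained value `U_w` dominates the
constrained value: `U_w(π) ≥ V_w(π,y)` for all `π ∈ [0,1]`, `y ∈ {0,1}`. -/
theorem stmt14 (p00 p10 ρ0 ρ1 β w θ11 θ01 θ00 : ℝ)
    (hp00 : p00 ∈ Icc (0:ℝ) 1) (hp10 : p10 ∈ Icc (0:ℝ) 1)
    (hρ0 : 0 < ρ0) (hρ01 : ρ0 < ρ1) (hρ1 : ρ1 < 1)
    (hβ : β ∈ Ioo (0:ℝ) 1)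
    (hθ11 : θ11 ∈ Icc (0:ℝ) 1) (hθ01 : θ01 ∈ Icc (0:ℝ) 1) (hθ00 : θ00 ∈ Icc (0:ℝ) 1)
    -- `U` is the unique bounded fixed point of the unconstrained operator
    (U : ℝ → ℝ)
    (hUb : ∃ C : ℝ, ∀ π ∈ Icc (0:ℝ) 1, |U π| ≤ C)
    (hUfix : ∀ π ∈ Icc (0:ℝ) 1, TuOp p00 p10 ρ0 ρ1 β w U π = U π)
    -- `V` is the unique bounded fixed point of the constrained operator
    (V : ℝ → Bool → ℝ) (hVb : BddOnIcc V)
    (hVfix : FixedOnIcc (TwOp p00 p10 ρ0 ρ1 β w θ11 θ01 θ00) V) :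
    ∀ π ∈ Icc (0:ℝ) 1, ∀ y : Bool, V π y ≤ U π := by
  have hρ0' : ρ0 ∈ Icc (0:ℝ) 1 := ⟨hρ0.le, (hρ01.trans hρ1).le⟩
  have hρ1' : ρ1 ∈ Icc (0:ℝ) 1 := ⟨(hρ0.trans hρ01).le, hρ1.le⟩
  have hbdd : ∃ B, ∀ q ∈ {q : ℝ × Bool | q.1 ∈ Icc (0:ℝ) 1}, V q.1 q.2 - U q.1 ≤ B := by
    obtain ⟨CU, hCU⟩ := hUb
    obtain ⟨CV, hCV⟩ := hVb
    exact ⟨CV + CU, fun q hq => by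
      linarith [(abs_le.1 (hCU q.1 hq)).1, (abs_le.1 (hCV q.1 hq q.2)).2]⟩
  have hnonpos := le_zero_of_bound_imp_mul_bound hβ.1.le hβ.2 hbdd fun B hB q hq =>
    sub_le_mul_of_fixedOnIcc hp00 hp10 hρ0' hρ1' hβ.1.le hθ11 hθ01 hθ00 hUfix hVfix
      (fun π hπ y => hB (π, y) hπ) q.1 hq q.2
  exact fun π hπ y => sub_nonpos.1 (hnonpos (π, y) hπ)
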